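/- Let K ⊆ F be differential fields and y_1, …, y_n ∈ F nonzero with y_i' = a_i y_i for a_i ∈ K. If no nontrivial monomial u = y_1^{k_1}⋯y_n^{k_n} (k_i ∈ ℤ, not all zero) belongs to K, then y_1, …, y_n are algebraically independent over K. -/

import Mathlib

/-! Each monomial `Y m = ∏ yᵢ ^ mᵢ` is again an exponential of an integral, `(Y m)' = A m · Y m`
with `A m = ∑ mᵢ aᵢ ∈ K`, so it suffices to show that the `Y m` are linearly independent over `K`.
Take a relation `∑ cₘ Y m = 0` of minimal length, normalized so that `c_{m₀} = 1`. Differentiating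
it and subtracting `A m₀` times it gives the shorter relation `∑ (cₘ' + cₘ (A m - A m₀)) Y m = 0`,
whose coefficients must therefore vanish; that says exactly that each `cₘ Y m / Y m₀` is a
constant, hence lies in `K`. As `Y m / Y m₀ = ∏ yᵢ ^ (mᵢ - m₀ᵢ)` is not in `K` for `m ≠ m₀`, the
relation has the single term `Y m₀ = 0`, which is absurd. -/

namespace Derivation

variable {A : Type*} [CommRing A]

def ofLeibniz (d : A → A) (hadd : ∀ a b, d (a + b) = d a + d b)
    (hmul : ∀ a b, d (a * b) = d a * b + a * d b) : Derivation ℤ A A :=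
  .mk' (AddMonoidHom.mk' d hadd).toIntLinearMap fun a b => by
    simp only [AddMonoidHom.coe_toIntLinearMap, AddMonoidHom.mk'_apply, hmul, smul_eq_mul]
    ring

section

variable {R : Type*} [CommSemiring R] [Algebra R A] (D : Derivation R A A)

theorem map_mul_of_eq_mul {x y α β : A} (hx : D x = α * x) (hy : D y = β * y) :
    D (x * y) = (α + β) * (x * y) := by
  rw [leibniz, hx, hy, smul_eq_mul, smul_eq_mul]
  ring

theorem map_pow_of_eq_mul {x α : A} (hx : D x = α * x) (n : ℕ) :
    D (x ^ n) = (n * α) * x ^ n := by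
  induction n with
  | zero => simp
  | succ n ih =>
    rw [pow_succ, D.map_mul_of_eq_mul ih hx]
    push_cast
    ring

theorem map_prod_of_eq_mul {ι : Type*} (s : Finset ι) {x α : ι → A}
    (h : ∀ i ∈ s, D (x i) = α i * x i) :
    D (∏ i ∈ s, x i) = (∑ i ∈ s, α i) * ∏ i ∈ s, x i := by
  classical
  induction s using Finset.induction with
  | empty => simp
  | insert j s hj ih =>
    rw [Finset.prod_insert hj, Finset.sum_insert hj,
      D.map_mul_of_eq_mul (h j (s.mem_insert_self j))
        (ih fun i hi => h i (Finset.mem_insert_of_mem hi))]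

end

section

variable {R F : Type*} [CommRing R] [Field F] [Algebra R F] (D : Derivation R F F)

theorem map_div_of_eq_mul {x y α β : F} (hx : D x = α * x) (hy : D y = β * y) (hy0 : y ≠ 0) :
    D (x / y) = (α - β) * (x / y) := by
  rw [leibniz_div, hx, hy, smul_eq_mul, smul_eq_mul, smul_eq_mul]
  field_simp

end

end Derivation

theorem algebraicIndependent_of_linearIndependent_monomials {σ R A : Type*} [CommRing R]
    [CommRing A] [Algebra R A] (x : σ → A)
    (h : LinearIndependent R fun m : σ →₀ ℕ => m.prod fun i e => x i ^ e) :
    AlgebraicIndependent R x := by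
  have h' : LinearIndependent R
      ((MvPolynomial.aeval x).toLinearMap ∘ MvPolynomial.basisMonomials σ R) := by
    convert h with m
    simp [MvPolynomial.aeval_monomial]
  exact LinearMap.injective_of_linearIndependent (MvPolynomial.basisMonomials σ R).span_eq h'

section ExponentialsOfIntegrals

variable {K F : Type*} [Field K] [Field F] [Algebra K F] (D : Derivation ℤ F F) {dK : K → K}
  (hcompat : ∀ c, D (algebraMap K F c) = algebraMap K F (dK c))
  {ι : Type*} {Y : ι → F} {A : ι → K} (hYA : ∀ i, D (Y i) = algebraMap K F (A i) * Y i)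
include hcompat hYA

theorem sum_deriv_smul_eq_zero_of_sum_smul_eq_zero {s : Finset ι} {c : ι → K} (b : K)
    (h : ∑ i ∈ s, c i • Y i = 0) :
    ∑ i ∈ s, (dK (c i) + c i * (A i - b)) • Y i = 0 := by
  have hD : ∑ i ∈ s, (algebraMap K F (dK (c i)) + algebraMap K F (c i) * algebraMap K F (A i))
      * Y i = 0 := by
    rw [← D.map_zero, ← h, map_sum]
    refine Finset.sum_congr rfl fun i _ => ?_
    rw [Algebra.smul_def, D.leibniz, hcompat, hYA, smul_eq_mul, smul_eq_mul]
    ring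
  simp only [Algebra.smul_def] at h ⊢
  calc ∑ i ∈ s, algebraMap K F (dK (c i) + c i * (A i - b)) * Y i
      = ∑ i ∈ s, (algebraMap K F (dK (c i)) + algebraMap K F (c i) * algebraMap K F (A i))
          * Y i - algebraMap K F b * ∑ i ∈ s, algebraMap K F (c i) * Y i := by
        rw [Finset.mul_sum, ← Finset.sum_sub_distrib]
        refine Finset.sum_congr rfl fun i _ => ?_
        simp only [map_add, map_mul, map_sub]
        ring
    _ = 0 := by rw [hD, h, mul_zero, sub_zero]

theorem div_mem_range_of_add_mul_sub_eq_zero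
    (hconst : ∀ x, D x = 0 → x ∈ (algebraMap K F).range) {i j : ι} (hj : Y j ≠ 0)
    {c : K} (hc : c ≠ 0) (h : dK c + c * (A i - A j) = 0) :
    Y i / Y j ∈ (algebraMap K F).range := by
  have hderiv : D (algebraMap K F c * (Y i / Y j)) = 0 := by
    have h' : algebraMap K F (dK c) + algebraMap K F c * (algebraMap K F (A i) -
        algebraMap K F (A j)) = 0 := by
      simpa only [map_add, map_mul, map_sub, map_zero] using congrArg (algebraMap K F) h
    rw [D.leibniz, D.map_div_of_eq_mul (hYA i) (hYA j) hj, hcompat, smul_eq_mul, smul_eq_mul]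
    linear_combination (Y i / Y j) * h'
  obtain ⟨b, hb⟩ := hconst _ hderiv
  refine ⟨b / c, ?_⟩
  rw [map_div₀, hb, mul_div_cancel_left₀ _ ((map_ne_zero _).mpr hc)]

theorem linearIndependent_of_div_notMem_range
    (hconst : ∀ x, D x = 0 → x ∈ (algebraMap K F).range) (hY0 : ∀ i, Y i ≠ 0)
    (hdiv : ∀ i j, i ≠ j → Y i / Y j ∉ (algebraMap K F).range) :
    LinearIndependent K Y := by
  classical
  have hdK1 : dK 1 = 0 :=
    (algebraMap K F).injective (by rw [← hcompat, map_one, D.map_one_eq_zero, map_zero])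
  rw [linearIndependent_iff']
  intro s
  induction s using Finset.strongInduction with
  | H s ih =>
  intro g hg i₀ hi₀
  by_contra hgi₀
  set c := fun i => g i / g i₀
  have hc : ∑ i ∈ s, c i • Y i = 0 := by
    simp only [c, div_eq_inv_mul, mul_smul, ← Finset.smul_sum, hg, smul_zero]
  have hc₀ : c i₀ = 1 := div_self hgi₀
  have hshorter : ∑ i ∈ s.erase i₀, (dK (c i) + c i * (A i - A i₀)) • Y i = 0 := by
    rw [← sum_deriv_smul_eq_zero_of_sum_smul_eq_zero D hcompat hYA (A i₀) hc,
      ← Finset.add_sum_erase s _ hi₀, hc₀, hdK1, sub_self, mul_zero, add_zero, zero_smul, zero_add]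
  have hvanish : ∀ i ∈ s.erase i₀, g i = 0 := fun i hi => by
    by_contra hgi
    exact hdiv i i₀ (Finset.ne_of_mem_erase hi) <|
      div_mem_range_of_add_mul_sub_eq_zero D hcompat hYA hconst (hY0 i₀)
        (div_ne_zero hgi hgi₀) (ih _ (Finset.erase_ssubset hi₀) _ hshorter i hi)
  rw [← Finset.add_sum_erase s _ hi₀,
    Finset.sum_eq_zero fun i hi => by rw [hvanish i hi, zero_smul], add_zero] at hg
  exact hY0 i₀ ((smul_eq_zero.mp hg).resolve_left hgi₀)

end ExponentialsOfIntegrals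

theorem exp_integrals_algebraically_independent_general
    {K F : Type*} [Field K] [Field F] [Algebra K F]
    (dK : K → K) (dF : F → F)
    (hFadd : ∀ a b, dF (a + b) = dF a + dF b)
    (hFmul : ∀ a b, dF (a * b) = dF a * b + a * dF b)
    (hcompat : ∀ c : K, dF (algebraMap K F c) = algebraMap K F (dK c))
    (hconst : ∀ x : F, dF x = 0 → x ∈ (algebraMap K F).range)
    (n : ℕ) (y : Fin n → F) (hy : ∀ i, y i ≠ 0)
    (a : Fin n → K) (hya : ∀ i, dF (y i) = algebraMap K F (a i) * y i)
    (hmono : ∀ k : Fin n → ℤ, (∃ i, k i ≠ 0) →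
      (∏ i, y i ^ k i) ∉ (algebraMap K F).range) :
    AlgebraicIndependent K y := by
  let D := Derivation.ofLeibniz dF hFadd hFmul
  refine algebraicIndependent_of_linearIndependent_monomials y ?_
  simp only [Finsupp.prod_pow]
  refine linearIndependent_of_div_notMem_range D hcompat (A := fun m => ∑ i, (m i : K) * a i)
    (fun m => ?_) hconst (fun m => Finset.prod_ne_zero_iff.mpr fun i _ => pow_ne_zero _ (hy i))
    (fun m m' hne => ?_)
  · rw [D.map_prod_of_eq_mul _ fun i _ => D.map_pow_of_eq_mul (hya i) (m i)]
    simp only [map_sum, map_mul, map_natCast]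
  · have hk : ∃ i, (m i : ℤ) - m' i ≠ 0 := by
      by_contra! h
      exact hne (Finsupp.ext fun i => by exact_mod_cast sub_eq_zero.mp (h i))
    have hdiv : (∏ i, y i ^ m i) / ∏ i, y i ^ m' i = ∏ i, y i ^ ((m i : ℤ) - m' i) := by
      rw [← Finset.prod_div_distrib]
      exact Finset.prod_congr rfl fun i _ => by rw [zpow_sub₀ (hy i), zpow_natCast, zpow_natCast]
    exact hdiv ▸ hmono _ hk

/-- If `y₁, …, yₙ ∈ F` are nonzero with `yᵢ' = aᵢ yᵢ`, `aᵢ ∈ K`, and no nontrivial monomial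
`y₁^{k₁}⋯yₙ^{kₙ}` (integer exponents, not all zero) belongs to `K`, then `y₁, …, yₙ` are
algebraically independent over `K`. -/
theorem exp_integrals_algebraically_independent
    {K F : Type*} [Field K] [Field F] [CharZero K] [Algebra K F]
    (dK : K → K) (dF : F → F)
    (hKadd : ∀ a b, dK (a + b) = dK a + dK b)
    (hKmul : ∀ a b, dK (a * b) = dK a * b + a * dK b)
    (hFadd : ∀ a b, dF (a + b) = dF a + dF b)
    (hFmul : ∀ a b, dF (a * b) = dF a * b + a * dF b)
    (hcompat : ∀ c : K, dF (algebraMap K F c) = algebraMap K F (dK c))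
    (hconst : ∀ x : F, dF x = 0 → x ∈ (algebraMap K F).range)
    (n : ℕ) (y : Fin n → F) (hy : ∀ i, y i ≠ 0)
    (a : Fin n → K) (hya : ∀ i, dF (y i) = algebraMap K F (a i) * y i)
    (hmono : ∀ k : Fin n → ℤ, (∃ i, k i ≠ 0) →
      (∏ i, y i ^ k i) ∉ (algebraMap K F).range) :
    AlgebraicIndependent K y :=
  exp_integrals_algebraically_independent_general dK dF hFadd hFmul hcompat hconst n y hy a hya
    hmono
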